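/- Let ρ be a nonzero σ-finite Borel measure on (0,1) with ∫₀¹ u ρ(du) < ∞; set φ(r) = ∫₀¹ (1 − (1−u)^r) ρ(du) and κ_{d,r}(ρ) = ∫₀¹ u^d (1−u)^r ρ(du). Then for every positive integer n, the weights π_ρ(m) = Π_{j=1}^{k} κ_{d_j, r_{j−1}}(ρ)/φ(r_j) sum to 1 over all ordered partitions m = (D_1,…,D_k) of {1,…,n} into nonempty blocks (k ranging over 1,…,n), where d_j = |D_j|, r_0 = 0 and r_j = d_1 + ⋯ + d_j. -/

import Mathlib

open MeasureTheory

/-- κ_{d,r}(ρ) = ∫₀¹ u^d (1−u)^r ρ(du). -/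
noncomputable def kappa (ρ : Measure ℝ) (d r : ℕ) : ℝ :=
  ∫ u in Set.Ioo (0:ℝ) 1, u ^ d * (1 - u) ^ r ∂ρ

/-- φ(r) = ∫₀¹ (1 − (1−u)^r) ρ(du). -/
noncomputable def phi (ρ : Measure ℝ) (r : ℕ) : ℝ :=
  ∫ u in Set.Ioo (0:ℝ) 1, (1 - (1 - u) ^ r) ∂ρ

/-- An ordered partition of {1,…,n}: a list of nonempty, pairwise disjoint blocks
whose union is {1,…,n}. -/
def IsOrderedPartition (n : ℕ) (l : List (Finset ℕ)) : Prop :=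
  (∀ D ∈ l, D.Nonempty) ∧ l.Pairwise Disjoint ∧
    l.foldr (· ∪ ·) ∅ = Finset.Icc 1 n

/-- The weight π_ρ(m) = Π_{j=1}^{k} κ_{d_j, r_{j−1}}(ρ)/φ(r_j) of an ordered
partition m = (D_1,…,D_k), where d_j = |D_j| and r_j = d_1 + ⋯ + d_j. -/
noncomputable def wList (ρ : Measure ℝ) (l : List (Finset ℕ)) : ℝ :=
  ∏ j ∈ Finset.range l.length,
    kappa ρ ((l.getD j ∅).card) (((l.take j).map Finset.card).sum) /
      phi ρ (((l.take (j + 1)).map Finset.card).sum)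

/-! ### Ordered partitions of a general finite set -/

def IsOP (s : Finset ℕ) (l : List (Finset ℕ)) : Prop :=
  (∀ D ∈ l, D.Nonempty) ∧ l.Pairwise Disjoint ∧ l.foldr (· ∪ ·) ∅ = s

lemma foldr_union_eq (l : List (Finset ℕ)) (a : Finset ℕ) :
    l.foldr (· ∪ ·) a = l.foldr (· ∪ ·) ∅ ∪ a := by
  induction l with
  | nil => simp
  | cons D t ih => simp [List.foldr_cons, ih, Finset.union_assoc]

lemma subset_foldr {l : List (Finset ℕ)} {x : Finset ℕ} (hx : x ∈ l) :
    x ⊆ l.foldr (· ∪ ·) ∅ := by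
  induction l with
  | nil => simp at hx
  | cons D t ih =>
    rcases List.mem_cons.mp hx with h | h
    · subst h; exact Finset.subset_union_left
    · exact (ih h).trans Finset.subset_union_right

lemma disjoint_foldr {l : List (Finset ℕ)} {D : Finset ℕ}
    (h : ∀ x ∈ l, Disjoint D x) : Disjoint D (l.foldr (· ∪ ·) ∅) := by
  induction l with
  | nil => simp
  | cons E t ih =>
    simp only [List.foldr_cons, Finset.disjoint_union_right]
    exact ⟨h E (by simp), ih fun x hx => h x (by simp [hx])⟩

lemma card_foldr {l : List (Finset ℕ)} (h : l.Pairwise Disjoint) :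
    (l.foldr (· ∪ ·) ∅).card = (l.map Finset.card).sum := by
  induction l with
  | nil => simp
  | cons D t ih =>
    rw [List.pairwise_cons] at h
    simp only [List.foldr_cons, List.map_cons, List.sum_cons]
    rw [Finset.card_union_of_disjoint (disjoint_foldr h.1), ih h.2]

lemma IsOP.sum_card {s : Finset ℕ} {l : List (Finset ℕ)} (h : IsOP s l) :
    (l.map Finset.card).sum = s.card := by
  rw [← card_foldr h.2.1, h.2.2]

lemma IsOP.length_le {s : Finset ℕ} {l : List (Finset ℕ)} (h : IsOP s l) :
    l.length ≤ s.card := by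
  rw [← h.sum_card]
  have := List.length_le_sum_of_one_le (l.map Finset.card) (by
    intro i hi
    obtain ⟨D, hD, rfl⟩ := List.mem_map.mp hi
    exact Finset.card_pos.mpr (h.1 D hD))
  simpa using this

lemma IsOP.subset {s : Finset ℕ} {l : List (Finset ℕ)} (h : IsOP s l)
    {x : Finset ℕ} (hx : x ∈ l) : x ⊆ s := h.2.2 ▸ subset_foldr hx

lemma isOP_nil : IsOP ∅ ([] : List (Finset ℕ)) := ⟨by simp, by simp, rfl⟩

lemma isOP_empty_iff {l : List (Finset ℕ)} : IsOP ∅ l ↔ l = [] := by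
  constructor
  · intro h
    cases l with
    | nil => rfl
    | cons D t =>
      have h1 : D.Nonempty := h.1 D (by simp)
      have h2 : D ⊆ ∅ := h.subset (by simp)
      simp [Finset.subset_empty.mp h2] at h1
  · rintro rfl; exact isOP_nil

lemma isOP_ne_nil {s : Finset ℕ} {l : List (Finset ℕ)} (h : IsOP s l) (hs : s.Nonempty) :
    l ≠ [] := by
  rintro rfl
  rw [← h.2.2] at hs
  simp at hs

lemma isOP_finite (s : Finset ℕ) : {l : List (Finset ℕ) | IsOP s l}.Finite := by
  have h1 : {l : List {D : Finset ℕ // D ∈ s.powerset} | l.length ≤ s.card}.Finite :=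
    List.finite_length_le _ _
  apply Set.Finite.subset (h1.image (List.map Subtype.val))
  intro l hl
  refine ⟨l.pmap (fun D h => (⟨D, h⟩ : {D : Finset ℕ // D ∈ s.powerset}))
      (fun D hD => Finset.mem_powerset.mpr (hl.subset hD)), ?_, ?_⟩
  · simp only [Set.mem_setOf_eq, List.length_pmap]
    exact hl.length_le
  · rw [List.map_pmap]
    simp [List.pmap_eq_map]

instance isOP_finite' (s : Finset ℕ) : Finite {l : List (Finset ℕ) // IsOP s l} :=
  (isOP_finite s).to_subtype

lemma isOP_append {s D : Finset ℕ} {l : List (Finset ℕ)} (hD : D ⊆ s) (hDne : D.Nonempty)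
    (hl : IsOP (s \ D) l) : IsOP s (l ++ [D]) := by
  obtain ⟨h1, h2, h3⟩ := hl
  refine ⟨?_, ?_, ?_⟩
  · intro x hx
    rcases List.mem_append.mp hx with h | h
    · exact h1 x h
    · simp only [List.mem_singleton] at h; exact h ▸ hDne
  · rw [List.pairwise_append]
    refine ⟨h2, by simp, ?_⟩
    intro x hx y hy
    rw [List.mem_singleton.mp hy]
    exact Finset.sdiff_disjoint.mono_left (h3 ▸ subset_foldr hx)
  · rw [List.foldr_append]
    simp only [List.foldr_cons, List.foldr_nil]
    rw [foldr_union_eq, h3, Finset.union_empty, Finset.sdiff_union_of_subset hD]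

lemma isOP_unappend {s D : Finset ℕ} {l : List (Finset ℕ)}
    (h : IsOP s (l ++ [D])) : IsOP (s \ D) l ∧ D ⊆ s ∧ D.Nonempty := by
  obtain ⟨h1, h2, h3⟩ := h
  rw [List.foldr_append] at h3
  simp only [List.foldr_cons, List.foldr_nil] at h3
  rw [foldr_union_eq, Finset.union_empty] at h3
  rw [List.pairwise_append] at h2
  have hdisj : Disjoint (l.foldr (· ∪ ·) ∅) D :=
    (disjoint_foldr fun x hx => (h2.2.2 x hx D (by simp)).symm).symm
  have hfold : l.foldr (· ∪ ·) ∅ = s \ D := by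
    rw [← h3, Finset.union_sdiff_cancel_right hdisj]
  refine ⟨⟨fun x hx => h1 x (by simp [hx]), h2.1, hfold⟩, ?_, h1 D (by simp)⟩
  rw [← h3]; exact Finset.subset_union_right

noncomputable def opEquiv (s : Finset ℕ) (hs : s.Nonempty) :
    (Σ D : {D : Finset ℕ // D ⊆ s ∧ D.Nonempty},
      {l : List (Finset ℕ) // IsOP (s \ D.1) l}) ≃ {l : List (Finset ℕ) // IsOP s l} :=
  Equiv.ofBijective
    (fun p => ⟨p.2.1 ++ [p.1.1], isOP_append p.1.2.1 p.1.2.2 p.2.2⟩)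
    (by
      constructor
      · rintro ⟨⟨D₁, hD₁⟩, ⟨l₁, hl₁⟩⟩ ⟨⟨D₂, hD₂⟩, ⟨l₂, hl₂⟩⟩ h
        simp only [Subtype.mk.injEq] at h
        rw [← List.concat_eq_append, ← List.concat_eq_append] at h
        obtain ⟨rfl, rfl⟩ : l₁ = l₂ ∧ D₁ = D₂ := by
          constructor
          · have := congrArg List.dropLast h
            simpa [List.concat_eq_append, List.dropLast_concat] using this
          · have := congrArg (List.getLast? ·) h
            simpa [List.concat_eq_append, List.getLast?_concat] using this
        rfl
      · rintro ⟨l, hl⟩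
        have hne : l ≠ [] := isOP_ne_nil hl hs
        have hd := isOP_unappend (s := s) (D := l.getLast hne) (l := l.dropLast)
          (by rw [List.dropLast_append_getLast hne]; exact hl)
        exact ⟨⟨⟨l.getLast hne, hd.2⟩, ⟨l.dropLast, hd.1⟩⟩,
          Subtype.ext (List.dropLast_append_getLast hne)⟩)

lemma opEquiv_apply (s : Finset ℕ) (hs : s.Nonempty)
    (p : Σ D : {D : Finset ℕ // D ⊆ s ∧ D.Nonempty},
      {l : List (Finset ℕ) // IsOP (s \ D.1) l}) :
    (opEquiv s hs p : List (Finset ℕ)) = p.2.1 ++ [p.1.1] := rfl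

/-! ### Weight lemmas -/

lemma wList_nil (ρ : Measure ℝ) : wList ρ [] = 1 := by simp [wList]

lemma wList_append (ρ : Measure ℝ) (l : List (Finset ℕ)) (D : Finset ℕ) :
    wList ρ (l ++ [D]) = wList ρ l *
      (kappa ρ D.card ((l.map Finset.card).sum) /
        phi ρ ((l.map Finset.card).sum + D.card)) := by
  unfold wList
  rw [List.length_append, List.length_singleton, Finset.prod_range_succ]
  congr 1
  · apply Finset.prod_congr rfl
    intro j hj
    rw [Finset.mem_range] at hj
    rw [List.getD_append _ _ _ _ hj, List.take_append_of_le_length hj.le,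
      List.take_append_of_le_length hj]
  · rw [List.getD_append_right _ _ _ _ le_rfl, Nat.sub_self]
    rw [List.take_append_of_le_length le_rfl, List.take_length]
    have : (l ++ [D]).take (l.length + 1) = l ++ [D] :=
      List.take_of_length_le (by simp)
    rw [this, List.map_append, List.sum_append]
    simp

/-! ### Analytic lemmas -/

variable {ρ : Measure ℝ}

lemma integrable_pow (hu : IntegrableOn (fun u => u) (Set.Ioo (0:ℝ) 1) ρ)
    {d : ℕ} (hd : 1 ≤ d) (r : ℕ) :
    IntegrableOn (fun u : ℝ => u ^ d * (1 - u) ^ r) (Set.Ioo 0 1) ρ := by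
  apply Integrable.mono' hu
  · exact ((continuous_pow d).mul
      ((continuous_const.sub continuous_id).pow r)).aestronglyMeasurable
  · filter_upwards [ae_restrict_mem measurableSet_Ioo] with u hu'
    obtain ⟨h0, h1⟩ := hu'
    rw [Real.norm_eq_abs, abs_of_nonneg
      (mul_nonneg (pow_nonneg h0.le _) (pow_nonneg (by linarith) _))]
    calc u ^ d * (1 - u) ^ r ≤ u ^ d * 1 := by
          apply mul_le_mul_of_nonneg_left _ (by positivity)
          exact pow_le_one₀ (by linarith) (by linarith)
      _ = u ^ d := mul_one _
      _ ≤ u ^ 1 := pow_le_pow_of_le_one h0.le h1.le hd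
      _ = u := pow_one u

lemma sum_term_eq (n : ℕ) (u : ℝ) :
    ∑ j ∈ Finset.range (n + 1),
      (if j = 0 then 0 else (n.choose j : ℝ) * (u ^ j * (1 - u) ^ (n - j)))
      = 1 - (1 - u) ^ n := by
  have h : ∑ j ∈ Finset.range (n + 1), u ^ j * (1 - u) ^ (n - j) * (n.choose j : ℝ) = 1 := by
    rw [← add_pow]; simp
  rw [Finset.sum_range_succ'] at h ⊢
  simp only [if_true, if_false, Nat.succ_ne_zero, add_zero] at *
  simp only [pow_zero, one_mul, Nat.choose_zero_right, Nat.cast_one, mul_one, Nat.sub_zero] at h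
  have h' : ∑ i ∈ Finset.range n, (n.choose (i+1) : ℝ) * (u ^ (i+1) * (1 - u) ^ (n - (i+1)))
      = ∑ i ∈ Finset.range n, u ^ (i+1) * (1 - u) ^ (n - (i+1)) * (n.choose (i+1) : ℝ) := by
    apply Finset.sum_congr rfl; intros; ring
  rw [h']
  linarith

lemma phi_eq_sum (hu : IntegrableOn (fun u => u) (Set.Ioo (0:ℝ) 1) ρ) (n : ℕ) :
    phi ρ n = ∑ j ∈ Finset.range (n + 1),
      (if j = 0 then 0 else (n.choose j : ℝ) * kappa ρ j (n - j)) := by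
  have hint : ∀ j ∈ Finset.range (n + 1), IntegrableOn
      (fun u : ℝ => if j = 0 then 0 else (n.choose j : ℝ) * (u ^ j * (1 - u) ^ (n - j)))
      (Set.Ioo 0 1) ρ := by
    intro j _
    rcases Nat.eq_zero_or_pos j with rfl | hj
    · simp only [if_pos rfl]
      exact integrableOn_zero
    · simp only [if_neg hj.ne']
      exact (integrable_pow hu hj (n - j)).const_mul _
  have key : (fun u : ℝ => 1 - (1 - u) ^ n) = fun u => ∑ j ∈ Finset.range (n + 1),
      (if j = 0 then 0 else (n.choose j : ℝ) * (u ^ j * (1 - u) ^ (n - j))) :=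
    funext fun u => (sum_term_eq n u).symm
  unfold phi
  rw [key, integral_finset_sum _ hint]
  apply Finset.sum_congr rfl
  intro j _
  rcases Nat.eq_zero_or_pos j with rfl | hj
  · simp
  · simp only [if_neg hj.ne']
    unfold kappa
    rw [integral_const_mul]

lemma integrableOn_phi (hu : IntegrableOn (fun u => u) (Set.Ioo (0:ℝ) 1) ρ) (n : ℕ) :
    IntegrableOn (fun u : ℝ => 1 - (1 - u) ^ n) (Set.Ioo 0 1) ρ := by
  have hint : ∀ j ∈ Finset.range (n + 1), IntegrableOn
      (fun u : ℝ => if j = 0 then 0 else (n.choose j : ℝ) * (u ^ j * (1 - u) ^ (n - j)))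
      (Set.Ioo 0 1) ρ := by
    intro j _
    rcases Nat.eq_zero_or_pos j with rfl | hj
    · simp only [if_pos rfl]; exact integrableOn_zero
    · simp only [if_neg hj.ne']
      exact (integrable_pow hu hj (n - j)).const_mul _
  have := integrable_finset_sum (μ := ρ.restrict (Set.Ioo 0 1)) (Finset.range (n + 1)) hint
  apply this.congr
  filter_upwards with u
  exact sum_term_eq n u

lemma phi_pos (hρ : ρ (Set.Ioo (0:ℝ) 1) ≠ 0)
    (hu : IntegrableOn (fun u => u) (Set.Ioo (0:ℝ) 1) ρ)
    {n : ℕ} (hn : 1 ≤ n) : 0 < phi ρ n := by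
  have h1 : 0 < ∫ u in Set.Ioo (0:ℝ) 1, u ∂ρ := by
    rw [setIntegral_pos_iff_support_of_nonneg_ae _ hu]
    · have : Function.support (fun u : ℝ => u) ∩ Set.Ioo 0 1 = Set.Ioo 0 1 := by
        apply Set.inter_eq_self_of_subset_right
        intro x hx
        exact ne_of_gt hx.1
      rw [this]
      exact pos_iff_ne_zero.mpr hρ
    · filter_upwards [ae_restrict_mem measurableSet_Ioo] with u hu'
      exact hu'.1.le
  have h2 : ∫ u in Set.Ioo (0:ℝ) 1, u ∂ρ ≤ phi ρ n := by
    apply setIntegral_mono_on hu (integrableOn_phi hu n) measurableSet_Ioo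
    intro u hu'
    have hle : (1 - u) ^ n ≤ (1 - u) ^ 1 :=
      pow_le_pow_of_le_one (by linarith [hu'.2]) (by linarith [hu'.1]) hn
    simp only [pow_one] at hle
    linarith
  linarith

lemma sum_kappa (hu : IntegrableOn (fun u => u) (Set.Ioo (0:ℝ) 1) ρ) (s : Finset ℕ) :
    ∑ D ∈ s.powerset.erase ∅, kappa ρ D.card (s.card - D.card) = phi ρ s.card := by
  have h0 : ∀ D ∈ s.powerset.erase ∅,
      kappa ρ D.card (s.card - D.card)
        = (if D.card = 0 then 0 else kappa ρ D.card (s.card - D.card)) := by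
    intro D hD
    rw [if_neg]
    simpa [Finset.card_eq_zero] using (Finset.mem_erase.mp hD).1
  rw [Finset.sum_congr rfl h0, Finset.sum_erase _ (by simp),
    Finset.sum_powerset_apply_card (fun m => if m = 0 then 0 else kappa ρ m (s.card - m)),
    phi_eq_sum hu s.card]
  apply Finset.sum_congr rfl
  intro j _
  rcases Nat.eq_zero_or_pos j with rfl | hj
  · simp
  · simp [if_neg hj.ne', mul_comm, nsmul_eq_mul]

/-! ### Main induction -/

lemma tsum_isOP (ρ : Measure ℝ) [SigmaFinite ρ]
    (hρ : ρ (Set.Ioo (0:ℝ) 1) ≠ 0)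
    (hu : IntegrableOn (fun u => u) (Set.Ioo (0:ℝ) 1) ρ)
    (s : Finset ℕ) :
    ∑' l : {l : List (Finset ℕ) // IsOP s l}, wList ρ l.val = 1 := by
  induction s using Finset.strongInduction with
  | _ s ih =>
    rcases s.eq_empty_or_nonempty with rfl | hs
    · letI : Unique {l : List (Finset ℕ) // IsOP (∅ : Finset ℕ) l} :=
        { default := ⟨[], isOP_nil⟩
          uniq := fun l => Subtype.ext (isOP_empty_iff.mp l.2) }
      rw [tsum_eq_single default (fun b hb => absurd (Subsingleton.elim b default) hb)]
      exact wList_nil ρ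
    · haveI fD : Fintype {D : Finset ℕ // D ⊆ s ∧ D.Nonempty} := by
        apply Set.Finite.fintype (s := {D : Finset ℕ | D ⊆ s ∧ D.Nonempty})
        apply Set.Finite.subset s.powerset.finite_toSet
        intro D hD
        simpa [Finset.mem_powerset] using hD.1
      haveI : Fintype {l : List (Finset ℕ) // IsOP s l} := Fintype.ofFinite _
      haveI fL : ∀ D : {D : Finset ℕ // D ⊆ s ∧ D.Nonempty},
          Fintype {l : List (Finset ℕ) // IsOP (s \ D.1) l} :=
        fun D => Fintype.ofFinite _
      have hcardpos : 1 ≤ s.card := Finset.card_pos.mpr hs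
      rw [tsum_fintype]
      rw [← Equiv.sum_comp (opEquiv s hs) (fun l => wList ρ l.val)]
      rw [← Finset.univ_sigma_univ, Finset.sum_sigma]
      have hterm : ∀ (D : {D : Finset ℕ // D ⊆ s ∧ D.Nonempty})
          (l' : {l : List (Finset ℕ) // IsOP (s \ D.1) l}),
          wList ρ ((opEquiv s hs ⟨D, l'⟩ : {l : List (Finset ℕ) // IsOP s l}).val)
            = wList ρ l'.val * (kappa ρ D.1.card (s.card - D.1.card) / phi ρ s.card) := by
        intro D l'
        rw [opEquiv_apply, wList_append]
        have hsum : (l'.val.map Finset.card).sum = s.card - D.1.card := by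
          rw [l'.2.sum_card, Finset.card_sdiff_of_subset D.2.1]
        rw [hsum, Nat.sub_add_cancel (Finset.card_le_card D.2.1)]
      calc (∑ D : {D : Finset ℕ // D ⊆ s ∧ D.Nonempty},
              ∑ l' : {l : List (Finset ℕ) // IsOP (s \ D.1) l},
              wList ρ ((opEquiv s hs ⟨D, l'⟩ : {l : List (Finset ℕ) // IsOP s l}).val))
          = ∑ D : {D : Finset ℕ // D ⊆ s ∧ D.Nonempty},
              kappa ρ D.1.card (s.card - D.1.card) / phi ρ s.card := by
            apply Finset.sum_congr rfl
            intro D _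
            have hIH : ∑ l' : {l : List (Finset ℕ) // IsOP (s \ D.1) l}, wList ρ l'.val = 1 := by
              rw [← tsum_fintype (L := SummationFilter.unconditional _)]
              exact ih (s \ D.1) (Finset.sdiff_ssubset D.2.1 D.2.2)
            rw [Finset.sum_congr rfl (fun l' _ => hterm D l'), ← Finset.sum_mul, hIH, one_mul]
        _ = (∑ D : {D : Finset ℕ // D ⊆ s ∧ D.Nonempty},
              kappa ρ D.1.card (s.card - D.1.card)) / phi ρ s.card := by
            rw [Finset.sum_div]
        _ = (∑ D ∈ s.powerset.erase ∅, kappa ρ D.card (s.card - D.card)) / phi ρ s.card := by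
            congr 1
            rw [Finset.sum_subtype (p := fun D => D ⊆ s ∧ D.Nonempty) (s.powerset.erase ∅)
              (fun D => by
                simp only [Finset.mem_erase, Finset.mem_powerset,
                  Finset.nonempty_iff_ne_empty, and_comm])
              (fun D => kappa ρ D.card (s.card - D.card))]
        _ = phi ρ s.card / phi ρ s.card := by rw [sum_kappa hu]
        _ = 1 := div_self (phi_pos hρ hu hcardpos).ne'

/-- The weights π_ρ(m) sum to 1 over all ordered partitions of {1,…,n}. -/
theorem stmt_5 (ρ : Measure ℝ) [SigmaFinite ρ]
    (hsupp : ρ (Set.Ioo (0:ℝ) 1)ᶜ = 0)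
    (hρ : ρ (Set.Ioo (0:ℝ) 1) ≠ 0)
    (hu : IntegrableOn (fun u => u) (Set.Ioo (0:ℝ) 1) ρ)
    (n : ℕ) (hn : 0 < n) :
    ∑' m : {l : List (Finset ℕ) // IsOrderedPartition n l}, wList ρ m.val = 1 := by
  have h : ∀ l, IsOrderedPartition n l ↔ IsOP (Finset.Icc 1 n) l := fun l => Iff.rfl
  exact tsum_isOP ρ hρ hu (Finset.Icc 1 n)
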